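/- arXiv:1812.09396 — 7 statements merged into one kernel-verified Lean document; each statement's English description precedes it below -/
import Mathlib

section
/- Let G be a finite simple graph, u a universal vertex of G, and k a positive integer. If G has a k-tuple dominating set, then the vertex-deleted subgraph G − u has a (k−1)-tuple dominating set and γ×k(G) = γ×(k−1)(G − u) + 1. -/
open Set

/-- The closed neighborhood `N[v]` of a vertex `v`: `v` together with its neighbors. -/
def closedNbhd {V : Type*} (G : SimpleGraph V) (v : V) : Set V :=
  insert v {w | G.Adj v w}

/-- `D` is a `k`-tuple dominating set of `G`: every vertex has at least `k` members of `D`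
in its closed neighborhood. -/
def IsKTupleDomSet {V : Type*} (G : SimpleGraph V) (k : ℕ) (D : Set V) : Prop :=
  ∀ v : V, k ≤ (closedNbhd G v ∩ D).ncard

/-- `γ×k(G)`: the minimum cardinality of a `k`-tuple dominating set of `G`. -/
noncomputable def gammaTuple {V : Type*} (G : SimpleGraph V) (k : ℕ) : ℕ :=
  sInf {n | ∃ D : Set V, IsKTupleDomSet G k D ∧ D.ncard = n}

/-- A vertex is universal if its closed neighborhood is the whole vertex set. -/
def IsUniversalVertex {V : Type*} (G : SimpleGraph V) (u : V) : Prop :=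
  closedNbhd G u = Set.univ

lemma mem_cn' {V : Type*} {G : SimpleGraph V} {v w : V} :
    w ∈ closedNbhd G v ↔ w = v ∨ G.Adj v w := by
  simp [closedNbhd]

section aux
variable {V : Type*} [Fintype V] {G : SimpleGraph V} {u : V}

omit [Fintype V] in
lemma mem_cn {v w : V} : w ∈ closedNbhd G v ↔ w = v ∨ G.Adj v w := by
  simp [closedNbhd]

omit [Fintype V] in
lemma u_mem_cn (hu : IsUniversalVertex G u) (v : V) : u ∈ closedNbhd G v := by
  rcases eq_or_ne v u with rfl | h
  · exact mem_cn.2 (Or.inl rfl)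
  · have hv : v ∈ closedNbhd G u := hu ▸ mem_univ v
    rcases mem_cn.1 hv with h' | h'
    · exact absurd h' h
    · exact mem_cn.2 (Or.inr h'.symm)

omit [Fintype V] in
lemma image_cn_inter (D2 : Set V) (hD2u : u ∉ D2) (v : ({v : V | v ≠ u} : Set V)) :
    (↑) '' (closedNbhd (G.induce {v : V | v ≠ u}) v ∩ {w : ({v : V | v ≠ u} : Set V) | ↑w ∈ D2})
      = closedNbhd G ↑v ∩ D2 := by
  ext w
  simp only [mem_image, mem_inter_iff, mem_setOf_eq]
  constructor
  · rintro ⟨⟨w, hw⟩, ⟨hN, hDm⟩, rfl⟩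
    refine ⟨?_, hDm⟩
    rcases mem_cn.1 hN with h | h
    · exact mem_cn.2 (Or.inl (congrArg Subtype.val h))
    · exact mem_cn.2 (Or.inr h)
  · rintro ⟨hN, hDm⟩
    have hwu : w ≠ u := fun h => hD2u (h ▸ hDm)
    refine ⟨⟨w, hwu⟩, ⟨?_, hDm⟩, rfl⟩
    rcases mem_cn.1 hN with h | h
    · exact mem_cn.2 (Or.inl (Subtype.ext h))
    · exact mem_cn.2 (Or.inr h)

lemma down (hu : IsUniversalVertex G u) {k : ℕ} (hk : 0 < k) {D : Set V}
    (hD : IsKTupleDomSet G k D) :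
    ∃ D' : Set ({v : V | v ≠ u} : Set V),
      IsKTupleDomSet (G.induce {v : V | v ≠ u}) (k - 1) D' ∧ D'.ncard + 1 = D.ncard := by
  have hDne : D.Nonempty := by
    by_contra h'
    rw [not_nonempty_iff_eq_empty] at h'
    have h := hD u
    simp [h'] at h
    omega
  obtain ⟨d, hd, hud⟩ : ∃ d ∈ D, u ∉ D \ {d} := by
    by_cases hu' : u ∈ D
    · exact ⟨u, hu', by simp⟩
    · obtain ⟨d, hd⟩ := hDne
      exact ⟨d, hd, fun h => hu' h.1⟩
  refine ⟨{w | ↑w ∈ D \ {d}}, ?_, ?_⟩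
  · intro v
    have himg := image_cn_inter (G := G) (u := u) (D \ {d}) hud v
    have hinj : (closedNbhd (G.induce {v : V | v ≠ u}) v ∩ {w | ↑w ∈ D \ {d}}).ncard
        = (closedNbhd G ↑v ∩ (D \ {d})).ncard := by
      rw [← himg, Set.ncard_image_of_injective _ Subtype.coe_injective]
    rw [hinj]
    have h1 : closedNbhd G ↑v ∩ D ⊆ insert d (closedNbhd G ↑v ∩ (D \ {d})) := by
      rintro x ⟨hx1, hx2⟩
      by_cases hxd : x = d
      · subst hxd; exact mem_insert x _
      · exact mem_insert_of_mem _ ⟨hx1, hx2, hxd⟩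
    have h2 := hD ↑v
    have h3 := Set.ncard_le_ncard h1 (Set.toFinite _)
    have h4 := Set.ncard_insert_le d (closedNbhd G ↑v ∩ (D \ {d}))
    omega
  · have himg : (↑) '' {w : ({v : V | v ≠ u} : Set V) | ↑w ∈ D \ {d}} = D \ {d} := by
      ext w
      simp only [mem_image, mem_setOf_eq]
      constructor
      · rintro ⟨⟨w, hw⟩, h, rfl⟩; exact h
      · intro h
        exact ⟨⟨w, fun he => hud (he ▸ h)⟩, h, rfl⟩
    have h5 := Set.ncard_diff_singleton_add_one hd (Set.toFinite D)
    rw [← Set.ncard_image_of_injective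
      ({w : ({v : V | v ≠ u} : Set V) | ↑w ∈ D \ {d}}) Subtype.coe_injective, himg]
    exact h5

lemma up (hu : IsUniversalVertex G u) {k : ℕ}
    {D' : Set ({v : V | v ≠ u} : Set V)}
    (hD' : IsKTupleDomSet (G.induce {v : V | v ≠ u}) (k - 1) D')
    (hcard : k - 1 ≤ D'.ncard) (hk : 0 < k) :
    IsKTupleDomSet G k (insert u ((↑) '' D')) ∧ (insert u ((↑) '' D')).ncard = D'.ncard + 1 := by
  have hunot : u ∉ ((↑) '' D' : Set V) := by
    rintro ⟨⟨w, hw⟩, _, h⟩; exact hw h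
  have hcard2 : (insert u ((↑) '' D')).ncard = D'.ncard + 1 := by
    rw [Set.ncard_insert_of_notMem hunot (Set.toFinite _),
      Set.ncard_image_of_injective _ Subtype.coe_injective]
  refine ⟨?_, hcard2⟩
  intro v
  rcases eq_or_ne v u with rfl | hv
  · have heq : closedNbhd G v ∩ insert v ((↑) '' D') = insert v ((↑) '' D') := by
      rw [hu]; exact univ_inter _
    rw [heq, hcard2]; omega
  · set v' : ({v : V | v ≠ u} : Set V) := ⟨v, hv⟩
    have hsub : insert u ((↑) '' (closedNbhd (G.induce {v : V | v ≠ u}) v' ∩ D'))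
        ⊆ closedNbhd G v ∩ insert u ((↑) '' D') := by
      intro x hx
      rcases hx with rfl | ⟨⟨w, hw⟩, ⟨hN, hDm⟩, rfl⟩
      · exact ⟨u_mem_cn hu v, mem_insert _ _⟩
      · refine ⟨?_, mem_insert_of_mem _ ⟨⟨w, hw⟩, hDm, rfl⟩⟩
        rcases mem_cn.1 hN with h | h
        · exact mem_cn.2 (Or.inl (congrArg Subtype.val h))
        · exact mem_cn.2 (Or.inr h)
    have hunot2 : u ∉ ((↑) '' (closedNbhd (G.induce {v : V | v ≠ u}) v' ∩ D') : Set V) := by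
      rintro ⟨⟨w, hw⟩, _, h⟩; exact hw h
    have h1 : k ≤ (insert u ((↑) '' (closedNbhd (G.induce {v : V | v ≠ u}) v' ∩ D'))).ncard := by
      rw [Set.ncard_insert_of_notMem hunot2 (Set.toFinite _),
        Set.ncard_image_of_injective _ Subtype.coe_injective]
      have := hD' v'
      omega
    exact le_trans h1 (Set.ncard_le_ncard hsub (Set.toFinite _))

lemma domcard (hu : IsUniversalVertex G u) {k : ℕ}
    (hex : ∃ D : Set V, IsKTupleDomSet G k D)
    {D' : Set ({v : V | v ≠ u} : Set V)}
    (hD' : IsKTupleDomSet (G.induce {v : V | v ≠ u}) (k - 1) D') :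
    k - 1 ≤ D'.ncard := by
  rcases le_or_gt k 1 with h1 | h1
  · omega
  · obtain ⟨D0, hD0⟩ := hex
    have h2 := hD0 u
    rw [hu, univ_inter] at h2
    have h3 : 1 < D0.ncard := lt_of_lt_of_le h1 h2
    obtain ⟨a, b, ha, hb, hab⟩ := (Set.one_lt_ncard_iff (Set.toFinite D0)).1 h3
    have : ∃ w : V, w ≠ u := by
      rcases eq_or_ne a u with rfl | h
      · exact ⟨b, fun hbu => hab hbu.symm⟩
      · exact ⟨a, h⟩
    obtain ⟨w, hw⟩ := this
    have h4 := hD' ⟨w, hw⟩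
    have h5 := Set.ncard_le_ncard (inter_subset_right
      (s := closedNbhd (G.induce {v : V | v ≠ u}) ⟨w, hw⟩)) (Set.toFinite D')
    omega

end aux

/-- if `u` is universal and `G` has a `k`-tuple dominating set, then `G - u` has a
`(k-1)`-tuple dominating set and `γ×k(G) = γ×(k-1)(G - u) + 1`. -/
theorem stmt3 {V : Type*} [Fintype V] (G : SimpleGraph V) (u : V)
    (hu : IsUniversalVertex G u) (k : ℕ) (hk : 0 < k)
    (hex : ∃ D : Set V, IsKTupleDomSet G k D) :
    (∃ D' : Set ({v : V | v ≠ u} : Set V),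
        IsKTupleDomSet (G.induce {v : V | v ≠ u}) (k - 1) D') ∧
      gammaTuple G k = gammaTuple (G.induce {v : V | v ≠ u}) (k - 1) + 1 := by
  obtain ⟨D0, hD0⟩ := hex
  obtain ⟨D1, hD1, hcard1⟩ := down hu hk hD0
  refine ⟨⟨D1, hD1⟩, ?_⟩
  have hex' : ∃ D : Set V, IsKTupleDomSet G k D := ⟨D0, hD0⟩
  simp only [gammaTuple]
  set A := {n | ∃ D : Set V, IsKTupleDomSet G k D ∧ D.ncard = n} with hA
  set B := {n | ∃ D' : Set ({v : V | v ≠ u} : Set V),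
    IsKTupleDomSet (G.induce {v : V | v ≠ u}) (k - 1) D' ∧ D'.ncard = n} with hB
  have hBne : B.Nonempty := ⟨D1.ncard, D1, hD1, rfl⟩
  have hAne : A.Nonempty := ⟨D0.ncard, D0, hD0, rfl⟩
  apply le_antisymm
  · obtain ⟨D', hD', hDc⟩ := Nat.sInf_mem hBne
    obtain ⟨hdom, hc⟩ := up hu hD' (domcard hu hex' hD') hk
    calc sInf A ≤ (insert u ((↑) '' D')).ncard := Nat.sInf_le ⟨_, hdom, rfl⟩
    _ = sInf B + 1 := by rw [hc, hDc]
  · obtain ⟨D, hDdom, hDc⟩ := Nat.sInf_mem hAne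
    obtain ⟨D'', hD'', hc⟩ := down hu hk hDdom
    have h6 : sInf B ≤ D''.ncard := Nat.sInf_le ⟨_, hD'', rfl⟩
    omega
end

section
/- Let G be a finite simple graph, U the set of its universal vertices, and k a positive integer with |U| ≤ k − 1. If G has a k-tuple dominating set, then the induced subgraph G − U has a (k−|U|)-tuple dominating set and γ×k(G) = γ×(k−|U|)(G − U) + |U|. -/
open Set

section Aux

variable {V : Type*} [Fintype V] {G : SimpleGraph V}

lemma mem_cn_comm {u v : V} : u ∈ closedNbhd G v ↔ v ∈ closedNbhd G u := by
  simp only [closedNbhd, Set.mem_insert_iff, Set.mem_setOf_eq]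
  constructor <;> rintro (h | h)
  · exact Or.inl h.symm
  · exact Or.inr h.symm
  · exact Or.inl h.symm
  · exact Or.inr h.symm

lemma U_subset_cn {U : Set V} (hU : U = {u : V | IsUniversalVertex G u}) (v : V) :
    U ⊆ closedNbhd G v := by
  intro u hu
  rw [hU] at hu
  have h : closedNbhd G u = Set.univ := hu
  rw [mem_cn_comm, h]
  trivial

lemma cn_induce_image {U : Set V} (v : (Uᶜ : Set V)) (D' : Set (Uᶜ : Set V)) :
    Subtype.val '' (closedNbhd (G.induce Uᶜ) v ∩ D') =
      closedNbhd G v.val ∩ Uᶜ ∩ (Subtype.val '' D') := by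
  ext x
  simp only [closedNbhd, Set.mem_image, Set.mem_inter_iff, Set.mem_insert_iff,
    Set.mem_setOf_eq, SimpleGraph.comap_adj]
  constructor
  · rintro ⟨w, ⟨hw1, hw2⟩, rfl⟩
    refine ⟨⟨?_, w.2⟩, w, hw2, rfl⟩
    rcases hw1 with h | h
    · exact Or.inl (congrArg Subtype.val h)
    · exact Or.inr h
  · rintro ⟨⟨hx1, hx2⟩, w, hw, rfl⟩
    refine ⟨w, ⟨?_, hw⟩, rfl⟩
    rcases hx1 with h | h
    · exact Or.inl (Subtype.ext h)
    · exact Or.inr h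

lemma image_val_subset_compl {U : Set V} (s : Set (Uᶜ : Set V)) :
    Subtype.val '' s ⊆ Uᶜ := by
  rintro x ⟨w, _, rfl⟩
  exact w.2

lemma restrict_dom {U : Set V} {k : ℕ} {D : Set V}
    (hD : IsKTupleDomSet G k D) :
    IsKTupleDomSet (G.induce Uᶜ) (k - U.ncard) (Subtype.val ⁻¹' D) := by
  intro v
  have himg : (closedNbhd (G.induce Uᶜ) v ∩ (Subtype.val ⁻¹' D)).ncard
      = (closedNbhd G v.val ∩ Uᶜ ∩ (Uᶜ ∩ D)).ncard := by
    rw [← Set.ncard_image_of_injective _ Subtype.val_injective, cn_induce_image,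
      Subtype.image_preimage_coe]
  have hsub : closedNbhd G v.val ∩ D ⊆ (closedNbhd G v.val ∩ Uᶜ ∩ (Uᶜ ∩ D)) ∪ U := by
    intro x hx
    by_cases hxU : x ∈ U
    · exact Or.inr hxU
    · exact Or.inl ⟨⟨hx.1, hxU⟩, hxU, hx.2⟩
  have h1 : k ≤ (closedNbhd G v.val ∩ D).ncard := hD v.val
  have h2 : (closedNbhd G v.val ∩ D).ncard
      ≤ (closedNbhd G v.val ∩ Uᶜ ∩ (Uᶜ ∩ D)).ncard + U.ncard :=
    le_trans (Set.ncard_le_ncard hsub (Set.toFinite _)) (Set.ncard_union_le _ _)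
  omega

lemma extend_dom {U : Set V} (hU : U = {u : V | IsUniversalVertex G u}) {k : ℕ}
    (hm : U.ncard ≤ k - 1) (hk : 0 < k) (hne : (Uᶜ : Set V).Nonempty)
    {D' : Set (Uᶜ : Set V)}
    (hD' : IsKTupleDomSet (G.induce Uᶜ) (k - U.ncard) D') :
    IsKTupleDomSet G k (U ∪ Subtype.val '' D') := by
  have hD'card : k - U.ncard ≤ D'.ncard := by
    obtain ⟨v, hv⟩ := hne
    exact le_trans (hD' ⟨v, hv⟩)
      (Set.ncard_le_ncard Set.inter_subset_right (Set.toFinite _))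
  have hdisj : Disjoint U (Subtype.val '' D') :=
    disjoint_compl_right.mono_right (image_val_subset_compl D')
  intro v
  by_cases hv : v ∈ U
  · have hcn : closedNbhd G v = Set.univ := by rw [hU] at hv; exact hv
    rw [hcn, Set.univ_inter, Set.ncard_union_eq hdisj,
      Set.ncard_image_of_injective _ Subtype.val_injective]
    omega
  · have hsub : U ∪ Subtype.val '' (closedNbhd (G.induce Uᶜ) ⟨v, hv⟩ ∩ D')
        ⊆ closedNbhd G v ∩ (U ∪ Subtype.val '' D') := by
      rw [cn_induce_image]
      rintro x (hx | hx)
      · exact ⟨U_subset_cn hU v hx, Or.inl hx⟩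
      · exact ⟨hx.1.1, Or.inr hx.2⟩
    have hdisj2 : Disjoint U (Subtype.val '' (closedNbhd (G.induce Uᶜ) ⟨v, hv⟩ ∩ D')) :=
      disjoint_compl_right.mono_right (image_val_subset_compl _)
    have h1 : (U ∪ Subtype.val '' (closedNbhd (G.induce Uᶜ) ⟨v, hv⟩ ∩ D')).ncard
        = U.ncard + (closedNbhd (G.induce Uᶜ) ⟨v, hv⟩ ∩ D').ncard := by
      rw [Set.ncard_union_eq hdisj2, Set.ncard_image_of_injective _ Subtype.val_injective]
    have h2 := hD' ⟨v, hv⟩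
    have h3 := Set.ncard_le_ncard hsub (Set.toFinite _)
    omega

lemma swap_dom {U : Set V} (hU : U = {u : V | IsUniversalVertex G u}) {k : ℕ}
    (hm : U.ncard ≤ k - 1) (hk : 0 < k) {D : Set V}
    (hD : IsKTupleDomSet G k D) (hDk : k ≤ D.ncard) :
    ∃ D₂ : Set V, IsKTupleDomSet G k D₂ ∧ U ⊆ D₂ ∧ D₂.ncard = D.ncard := by
  have e1 : (D ∩ U).ncard + (D \ U).ncard = D.ncard :=
    Set.ncard_inter_add_ncard_diff_eq_ncard D U (Set.toFinite _)
  have e2 : (U ∩ D).ncard + (U \ D).ncard = U.ncard :=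
    Set.ncard_inter_add_ncard_diff_eq_ncard U D (Set.toFinite _)
  have e3 : (D ∩ U).ncard = (U ∩ D).ncard := by rw [Set.inter_comm]
  have h1 : (U \ D).ncard ≤ (D \ U).ncard := by omega
  obtain ⟨S, hSsub, hScard⟩ := Set.exists_subset_card_eq h1
  refine ⟨(D \ S) ∪ U, ?_, fun x hx => Or.inr hx, ?_⟩
  · intro v
    have hUcn : U ⊆ closedNbhd G v := U_subset_cn hU v
    have hSnotU : ∀ x ∈ S, x ∉ U := fun x hx => (hSsub hx).2
    have hseq : closedNbhd G v ∩ ((D \ S) ∪ U)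
        = ((closedNbhd G v ∩ D) ∪ U) \ S := by
      ext x
      simp only [Set.mem_inter_iff, Set.mem_union, Set.mem_diff]
      constructor
      · rintro ⟨hcn, (⟨hd, hs⟩ | hu)⟩
        · exact ⟨Or.inl ⟨hcn, hd⟩, hs⟩
        · exact ⟨Or.inr hu, fun hs => hSnotU x hs hu⟩
      · rintro ⟨(⟨hcn, hd⟩ | hu), hs⟩
        · exact ⟨hcn, Or.inl ⟨hd, hs⟩⟩
        · exact ⟨hUcn hu, Or.inr hu⟩
    have hueq : U \ (closedNbhd G v ∩ D) = U \ D := by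
      ext x
      simp only [Set.mem_diff, Set.mem_inter_iff]
      exact ⟨fun ⟨h1', h2'⟩ => ⟨h1', fun hd => h2' ⟨hUcn h1', hd⟩⟩,
        fun ⟨h1', h2'⟩ => ⟨h1', fun h => h2' h.2⟩⟩
    have f3 : ((closedNbhd G v ∩ D) ∪ U).ncard
        = (closedNbhd G v ∩ D).ncard + (U \ D).ncard := by
      rw [← Set.union_diff_self, Set.ncard_union_eq Set.disjoint_sdiff_right
        (Set.toFinite _) (Set.toFinite _), hueq]
    have f2 : ((closedNbhd G v ∩ D) ∪ U).ncard
        ≤ (((closedNbhd G v ∩ D) ∪ U) \ S).ncard + S.ncard := by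
      refine le_trans (Set.ncard_le_ncard ?_ (Set.toFinite _)) (Set.ncard_union_le _ _)
      intro x hx
      by_cases hxs : x ∈ S
      · exact Or.inr hxs
      · exact Or.inl ⟨hx, hxs⟩
    have f4 := hD v
    rw [hseq]
    omega
  · have hSD : S ⊆ D := fun x hx => (hSsub hx).1
    have g1 : ((D \ S) ∪ U).ncard = ((D \ S) \ U).ncard + U.ncard := by
      rw [← Set.ncard_union_eq Set.disjoint_sdiff_left (Set.toFinite _) (Set.toFinite _),
        Set.diff_union_self]
    have g2 : (D \ S) \ U = (D \ U) \ S := by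
      ext x; simp only [Set.mem_diff]; tauto
    have g2' : ((D \ S) \ U).ncard = ((D \ U) \ S).ncard := by rw [g2]
    have g3 : ((D \ U) \ S).ncard = (D \ U).ncard - S.ncard :=
      Set.ncard_diff hSsub (Set.toFinite _)
    omega

end Aux

/-- if `U` is the set of universal vertices of `G`, `|U| ≤ k - 1` and `G` has a
`k`-tuple dominating set, then `G - U` has a `(k - |U|)`-tuple dominating set and
`γ×k(G) = γ×(k-|U|)(G - U) + |U|`. -/
theorem stmt4 {V : Type*} [Fintype V] (G : SimpleGraph V) (U : Set V)
    (hU : U = {u : V | IsUniversalVertex G u}) (k : ℕ) (hk : 0 < k)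
    (hUk : U.ncard ≤ k - 1)
    (hex : ∃ D : Set V, IsKTupleDomSet G k D) :
    (∃ D' : Set (Uᶜ : Set V), IsKTupleDomSet (G.induce Uᶜ) (k - U.ncard) D') ∧
      gammaTuple G k = gammaTuple (G.induce Uᶜ) (k - U.ncard) + U.ncard := by
  obtain ⟨D₀, hD₀⟩ := hex
  rcases isEmpty_or_nonempty V with hV | hV
  · have hU0 : U = ∅ := Set.eq_empty_of_isEmpty U
    have hdom : ∀ (m : ℕ) , IsKTupleDomSet G m (∅ : Set V) := fun m v => (IsEmpty.false v).elim
    have hdom' : IsKTupleDomSet (G.induce Uᶜ) (k - U.ncard) (∅ : Set (Uᶜ : Set V)) :=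
      fun v => (IsEmpty.false v.val).elim
    refine ⟨⟨∅, hdom'⟩, ?_⟩
    have h1 : gammaTuple G k = 0 :=
      Nat.eq_zero_of_le_zero (Nat.sInf_le ⟨∅, hdom k, Set.ncard_empty V⟩)
    have h2 : gammaTuple (G.induce Uᶜ) (k - U.ncard) = 0 :=
      Nat.eq_zero_of_le_zero (Nat.sInf_le ⟨∅, hdom', Set.ncard_empty _⟩)
    rw [h1, h2, hU0, Set.ncard_empty]
  · -- V nonempty
    obtain ⟨v₀⟩ := hV
    have hD₀k : k ≤ D₀.ncard :=
      le_trans (hD₀ v₀) (Set.ncard_le_ncard Set.inter_subset_right (Set.toFinite _))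
    have hne : (Uᶜ : Set V).Nonempty := by
      by_contra h
      rw [Set.not_nonempty_iff_eq_empty, Set.compl_empty_iff] at h
      have : D₀.ncard ≤ U.ncard := by
        rw [h]
        exact Set.ncard_le_ncard (Set.subset_univ D₀) (Set.toFinite _)
      omega
    have hrest := restrict_dom (U := U) hD₀
    refine ⟨⟨_, hrest⟩, ?_⟩
    -- the two gammaTuple sets are nonempty
    have hsetG : {n | ∃ D : Set V, IsKTupleDomSet G k D ∧ D.ncard = n}.Nonempty :=
      ⟨D₀.ncard, D₀, hD₀, rfl⟩
    have hsetI : {n | ∃ D' : Set (Uᶜ : Set V),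
        IsKTupleDomSet (G.induce Uᶜ) (k - U.ncard) D' ∧ D'.ncard = n}.Nonempty :=
      ⟨_, _, hrest, rfl⟩
    apply le_antisymm
    · -- γ ≤ γ' + m
      obtain ⟨D', hD', hD'card⟩ := Nat.sInf_mem hsetI
      have hdom := extend_dom hU hUk hk hne hD'
      have hdisj : Disjoint U (Subtype.val '' D') :=
        disjoint_compl_right.mono_right (image_val_subset_compl D')
      have hcard : (U ∪ Subtype.val '' D').ncard
          = gammaTuple (G.induce Uᶜ) (k - U.ncard) + U.ncard := by
        unfold gammaTuple
        rw [Set.ncard_union_eq hdisj,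
          Set.ncard_image_of_injective _ Subtype.val_injective, hD'card]
        omega
      exact Nat.sInf_le ⟨_, hdom, hcard⟩
    · -- γ' + m ≤ γ
      obtain ⟨D, hD, hDcard⟩ := Nat.sInf_mem hsetG
      have hDk : k ≤ D.ncard :=
        le_trans (hD v₀) (Set.ncard_le_ncard Set.inter_subset_right (Set.toFinite _))
      obtain ⟨D₂, hD₂, hUD₂, hD₂card⟩ := swap_dom hU hUk hk hD hDk
      have hrest₂ := restrict_dom (U := U) hD₂
      have hcard₂ : (Subtype.val ⁻¹' D₂ : Set (Uᶜ : Set V)).ncard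
          = D₂.ncard - U.ncard := by
        rw [← Set.ncard_image_of_injective _ Subtype.val_injective,
          Subtype.image_preimage_coe]
        have h1 : (D₂ ∩ U).ncard + (D₂ \ U).ncard = D₂.ncard :=
          Set.ncard_inter_add_ncard_diff_eq_ncard D₂ U (Set.toFinite _)
        have h2 : (D₂ ∩ U).ncard = U.ncard := by
          rw [Set.inter_eq_right.mpr hUD₂]
        have h3 : (Uᶜ ∩ D₂ : Set V) = D₂ \ U := by
          ext x; simp only [Set.mem_inter_iff, Set.mem_diff, Set.mem_compl_iff]; tauto
        rw [h3]
        omega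
      have hle : gammaTuple (G.induce Uᶜ) (k - U.ncard) ≤ D₂.ncard - U.ncard :=
        Nat.sInf_le ⟨_, hrest₂, hcard₂⟩
      have hDg : D.ncard = gammaTuple G k := hDcard
      have hmle : U.ncard ≤ D₂.ncard := by
        calc U.ncard ≤ k - 1 := hUk
        _ ≤ D.ncard := by omega
        _ = D₂.ncard := hD₂card.symm
      omega
end

section
/- Let G be a finite simple graph whose vertex set is the disjoint union of two nonempty cliques C1 and C2, and suppose G has no universal vertex. Let {i,j} = {1,2}, let t be a positive integer, and let S ⊆ C_j be such that every vertex v ∈ C_i satisfies |N[v] ∩ S| ≥ t. Then |S| ≥ t + 1. -/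
open Set

lemma stmt6_aux {V : Type*} [Fintype V] (G : SimpleGraph V) (C1 C2 : Set V)
    (hd12 : Disjoint C1 C2) (hunion : C1 ∪ C2 = Set.univ)
    (hne1 : C1.Nonempty) (hcl2 : G.IsClique C2)
    (hnouniv : ∀ v : V, ¬ IsUniversalVertex G v)
    (t : ℕ) (ht : 0 < t) (S : Set V)
    (hS2 : S ⊆ C2) (hdom : ∀ v ∈ C1, t ≤ (closedNbhd G v ∩ S).ncard) :
    t + 1 ≤ S.ncard := by
  by_contra h
  push_neg at h
  have hSle : S.ncard ≤ t := Nat.lt_succ_iff.mp h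
  -- every v ∈ C1 has S ⊆ N[v]
  have hsub : ∀ v ∈ C1, S ⊆ closedNbhd G v := by
    intro v hv
    have h1 : t ≤ (closedNbhd G v ∩ S).ncard := hdom v hv
    have h2 : S.ncard ≤ (closedNbhd G v ∩ S).ncard := le_trans hSle h1
    have := Set.eq_of_subset_of_ncard_le (inter_subset_right) h2 S.toFinite
    rw [← this]
    exact inter_subset_left
  obtain ⟨v0, hv0⟩ := hne1
  have hSne : S.Nonempty := by
    have := hdom v0 hv0
    have hpos : 0 < (closedNbhd G v0 ∩ S).ncard := lt_of_lt_of_le ht this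
    rcases Set.nonempty_of_ncard_ne_zero (s := closedNbhd G v0 ∩ S) hpos.ne' with ⟨x, hx⟩
    exact ⟨x, hx.2⟩
  obtain ⟨s, hs⟩ := hSne
  apply hnouniv s
  ext w
  simp only [Set.mem_univ, iff_true]
  have hw : w ∈ C1 ∪ C2 := hunion ▸ Set.mem_univ w
  by_cases hws : w = s
  · exact hws ▸ Set.mem_insert _ _
  rcases hw with hw | hw
  · -- w ∈ C1 : S ⊆ N[w], so s ∈ N[w], s ≠ w so Adj w s
    have hsw : s ∈ closedNbhd G w := hsub w hw hs
    have hne : s ≠ w := by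
      intro hEq
      exact hd12.ne_of_mem hw (hS2 hs) hEq.symm
    rcases hsw with hEq | hadj
    · exact absurd hEq hne
    · exact Set.mem_insert_of_mem _ (hadj.symm)
  · exact Set.mem_insert_of_mem _ (hcl2 (hS2 hs) hw (fun hEq => hws hEq.symm))

/-- with `V(G)` the disjoint union of two nonempty cliques and no universal
vertex, if `S ⊆ C_j` and every `v ∈ C_i` has at least `t ≥ 1` members of `S` in its closed
neighborhood (for `{i,j} = {1,2}`), then `|S| ≥ t + 1`. -/
theorem stmt6 {V : Type*} [Fintype V] (G : SimpleGraph V) (C1 C2 : Set V)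
    (hd12 : Disjoint C1 C2) (hunion : C1 ∪ C2 = Set.univ)
    (hne1 : C1.Nonempty) (hne2 : C2.Nonempty)
    (hcl1 : G.IsClique C1) (hcl2 : G.IsClique C2)
    (hnouniv : ∀ v : V, ¬ IsUniversalVertex G v)
    (t : ℕ) (ht : 0 < t) (S : Set V)
    (hS : (S ⊆ C2 ∧ ∀ v ∈ C1, t ≤ (closedNbhd G v ∩ S).ncard) ∨
          (S ⊆ C1 ∧ ∀ v ∈ C2, t ≤ (closedNbhd G v ∩ S).ncard)) :
    t + 1 ≤ S.ncard := by
  rcases hS with ⟨hS2, hdom⟩ | ⟨hS1, hdom⟩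
  · exact stmt6_aux G C1 C2 hd12 hunion hne1 hcl2 hnouniv t ht S hS2 hdom
  · exact stmt6_aux G C2 C1 hd12.symm (by rw [Set.union_comm]; exact hunion) hne2 hcl1 hnouniv t ht S hS1 hdom
end

section
/- With G, C1, C2, α_1, α_2 as in the context (in particular G has no universal vertex), if α_1 + α_2 ≥ 3, then G has a 2-tuple dominating set and γ×2(G) = 3. -/
open Set

/-- The non-neighbor set `N̄(v) = V \ N[v]`. -/
def nonNbhd {V : Type*} (G : SimpleGraph V) (v : V) : Set V :=
  (closedNbhd G v)ᶜ

/-- `S` is a stable set of the auxiliary interval graph `H_i`: the non-neighbor sets of the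
vertices of `S` are pairwise disjoint. -/
def IsC0PStable {V : Type*} (G : SimpleGraph V) (S : Set V) : Prop :=
  S.Pairwise fun u w => Disjoint (nonNbhd G u) (nonNbhd G w)

lemma nbhd_symm {V : Type*} (G : SimpleGraph V) {u v : V} :
    u ∈ closedNbhd G v ↔ v ∈ closedNbhd G u := by
  simp only [closedNbhd, Set.mem_insert_iff, Set.mem_setOf_eq]
  constructor <;> rintro (h | h) <;> simp [h.symm, G.adj_comm]

lemma clique_mem_nbhd {V : Type*} {G : SimpleGraph V} {A : Set V} (hcl : G.IsClique A)
    {u v : V} (hu : u ∈ A) (hv : v ∈ A) : u ∈ closedNbhd G v := by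
  rcases eq_or_ne v u with rfl | hne
  · exact Set.mem_insert _ _
  · exact Set.mem_insert_of_mem _ (hcl hv hu hne)

lemma two_le_ncard {V : Type*} [Fintype V] {s : Set V} {a b : V}
    (ha : a ∈ s) (hb : b ∈ s) (hab : a ≠ b) : 2 ≤ s.ncard :=
  (Set.one_lt_ncard_iff s.toFinite).2 ⟨a, b, ha, hb, hab⟩

/-- Construction of a 2-tuple dominating set of size 3. -/
lemma dom_of_pair {V : Type*} [Fintype V] (G : SimpleGraph V) (A B : Set V)
    (hd : Disjoint A B) (hAB : A ∪ B = Set.univ)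
    (hclA : G.IsClique A) (hclB : G.IsClique B)
    {u w x : V} (hu : u ∈ A) (hw : w ∈ A) (hx : x ∈ B) (huw : u ≠ w)
    (hdis : Disjoint (nonNbhd G u) (nonNbhd G w)) :
    IsKTupleDomSet G 2 ({u, w, x} : Set V) ∧ ({u, w, x} : Set V).ncard = 3 := by
  have hux : u ≠ x := fun e => (hd.ne_of_mem hu hx) e
  have hwx : w ≠ x := fun e => (hd.ne_of_mem hw hx) e
  constructor
  · intro v
    have hv : v ∈ A ∪ B := hAB ▸ Set.mem_univ v
    rcases hv with hv | hv
    · -- v in A: u and w are both in N[v]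
      have h1 : u ∈ closedNbhd G v ∩ {u, w, x} :=
        ⟨clique_mem_nbhd hclA hu hv, by simp⟩
      have h2 : w ∈ closedNbhd G v ∩ {u, w, x} :=
        ⟨clique_mem_nbhd hclA hw hv, by simp⟩
      exact two_le_ncard h1 h2 huw
    · -- v in B: x ∈ N[v], and one of u, w is in N[v]
      have hxv : x ∈ closedNbhd G v ∩ {u, w, x} :=
        ⟨clique_mem_nbhd hclB hx hv, by simp⟩
      have hone : u ∈ closedNbhd G v ∨ w ∈ closedNbhd G v := by
        by_contra hc
        push_neg at hc
        have h1 : v ∈ nonNbhd G u := by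
          simp only [nonNbhd, Set.mem_compl_iff]
          exact fun hh => hc.1 ((nbhd_symm G).2 hh)
        have h2 : v ∈ nonNbhd G w := by
          simp only [nonNbhd, Set.mem_compl_iff]
          exact fun hh => hc.2 ((nbhd_symm G).2 hh)
        exact (Set.disjoint_left.1 hdis h1) h2
      rcases hone with hone | hone
      · exact two_le_ncard ⟨hone, by simp⟩ hxv hux
      · exact two_le_ncard ⟨hone, by simp⟩ hxv hwx
  · exact Set.ncard_eq_three.2 ⟨u, w, x, huw, hux, hwx, rfl⟩

/-- Any 2-tuple dominating set has at least 3 elements if there is no universal vertex. -/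
lemma three_le_card {V : Type*} [Fintype V] [Nonempty V] (G : SimpleGraph V)
    (hnouniv : ∀ v : V, ¬ IsUniversalVertex G v)
    {D : Set V} (hD : IsKTupleDomSet G 2 D) : 3 ≤ D.ncard := by
  by_contra hlt
  push_neg at hlt
  have hsub : ∀ v : V, D ⊆ closedNbhd G v := by
    intro v
    have h2 := hD v
    have hle : (closedNbhd G v ∩ D).ncard ≤ D.ncard :=
      Set.ncard_le_ncard Set.inter_subset_right D.toFinite
    have heq : closedNbhd G v ∩ D = D :=
      Set.eq_of_subset_of_ncard_le Set.inter_subset_right (by omega) D.toFinite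
    intro a ha
    rw [← heq] at ha
    exact ha.1
  have hDne : D.Nonempty := by
    rcases Set.eq_empty_or_nonempty D with rfl | hne
    · have h2 := hD (Classical.arbitrary V)
      simp at h2
    · exact hne
  obtain ⟨a, ha⟩ := hDne
  refine hnouniv a ?_
  refine Set.eq_univ_of_forall fun v => ?_
  exact (nbhd_symm G).1 (hsub v ha)

/-- in a C0P-graph with no universal vertices, if `α1 + α2 ≥ 3` then `G` has a
`2`-tuple dominating set and `γ×2(G) = 3`. -/
theorem stmt9 {V : Type*} [Fintype V] [LinearOrder V] (G : SimpleGraph V) (C1 C2 : Set V)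
    (hd12 : Disjoint C1 C2) (hunion : C1 ∪ C2 = Set.univ)
    (hne1 : C1.Nonempty) (hne2 : C2.Nonempty)
    (hcl1 : G.IsClique C1) (hcl2 : G.IsClique C2)
    (hnouniv : ∀ v : V, ¬ IsUniversalVertex G v)
    (hint1 : ∀ v ∈ C1, (nonNbhd G v).Nonempty ∧
      ∀ a ∈ C2, ∀ b ∈ C2, ∀ c ∈ C2, a ≤ b → b ≤ c →
        a ∈ nonNbhd G v → c ∈ nonNbhd G v → b ∈ nonNbhd G v)
    (hint2 : ∀ v ∈ C2, (nonNbhd G v).Nonempty ∧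
      ∀ a ∈ C1, ∀ b ∈ C1, ∀ c ∈ C1, a ≤ b → b ≤ c →
        a ∈ nonNbhd G v → c ∈ nonNbhd G v → b ∈ nonNbhd G v)
    (α1 α2 : ℕ)
    (hα1 : IsGreatest {n | ∃ S : Set V, S ⊆ C1 ∧ IsC0PStable G S ∧ S.ncard = n} α1)
    (hα2 : IsGreatest {n | ∃ S : Set V, S ⊆ C2 ∧ IsC0PStable G S ∧ S.ncard = n} α2)
    (h : 3 ≤ α1 + α2) :
    (∃ D : Set V, IsKTupleDomSet G 2 D) ∧ gammaTuple G 2 = 3 := by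
  have hNV : Nonempty V := ⟨hne1.some⟩
  -- produce a 2-tuple dominating set of cardinality 3
  have hex : ∃ D : Set V, IsKTupleDomSet G 2 D ∧ D.ncard = 3 := by
    have hcase : 2 ≤ α1 ∨ 2 ≤ α2 := by omega
    rcases hcase with hc | hc
    · obtain ⟨S, hS1, hSst, hScard⟩ := hα1.1
      obtain ⟨u, w, hu, hw, huw⟩ := (Set.one_lt_ncard_iff S.toFinite).1 (by omega)
      obtain ⟨x, hx⟩ := hne2
      exact ⟨_, dom_of_pair G C1 C2 hd12 hunion hcl1 hcl2 (hS1 hu) (hS1 hw) hx huw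
        (hSst hu hw huw)⟩
    · obtain ⟨S, hS2, hSst, hScard⟩ := hα2.1
      obtain ⟨u, w, hu, hw, huw⟩ := (Set.one_lt_ncard_iff S.toFinite).1 (by omega)
      obtain ⟨x, hx⟩ := hne1
      exact ⟨_, dom_of_pair G C2 C1 hd12.symm (Set.union_comm C1 C2 ▸ hunion) hcl2 hcl1
        (hS2 hu) (hS2 hw) hx huw (hSst hu hw huw)⟩
  obtain ⟨D, hDdom, hD3⟩ := hex
  refine ⟨⟨D, hDdom⟩, ?_⟩
  have hmem : 3 ∈ {n | ∃ D : Set V, IsKTupleDomSet G 2 D ∧ D.ncard = n} := ⟨D, hDdom, hD3⟩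
  have hle : gammaTuple G 2 ≤ 3 := Nat.sInf_le hmem
  have hge : 3 ≤ gammaTuple G 2 := by
    obtain ⟨D', hD', hcard⟩ := Nat.sInf_mem (⟨3, hmem⟩ :
      {n | ∃ D : Set V, IsKTupleDomSet G 2 D ∧ D.ncard = n}.Nonempty)
    rw [gammaTuple, ← hcard]
    exact three_le_card G hnouniv hD'
  omega
end

section
/- With G, C1, C2, U, α_1, α_2 as in the context, where |U| = 1: if α_1 + α_2 ≥ 3, then G has a 3-tuple dominating set and γ×3(G) = 4; and if α_1 = α_2 = 1 and |C1| ≥ 2 and |C2| ≥ 2, then G has a 3-tuple dominating set and γ×3(G) = 5. -/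
/-!
A `3`-tuple dominating set with at most `3` vertices lies in every closed neighbourhood, so it
consists of universal vertices; as `u` is the only one, `γ×3(G) ≥ 4`. If `a, b ∈ C_i` have
disjoint non-neighbourhoods, every vertex misses at most one of them, so `{u, a, b, c}` with
`c` in the other clique is `3`-tuple dominating. If `α1 = α2 = 1`, any two vertices of a clique
have a common non-neighbour `w`; in a `3`-tuple dominating set `D` of `4` vertices, `w` has at
most one non-neighbour in `D`, so `D` meets each of `C1`, `C2`, `{u}` at most once, which is
absurd. Two vertices of each clique together with `u` give a dominating set of size `5`.
-/

open Set

section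

variable {V : Type*} {G : SimpleGraph V}

lemma mem_closedNbhd_comm {v w : V} : w ∈ closedNbhd G v ↔ v ∈ closedNbhd G w := by
  simp only [closedNbhd, mem_insert_iff, mem_ofPred_eq, eq_comm (a := w), G.adj_comm]

lemma mem_nonNbhd_comm {v w : V} : w ∈ nonNbhd G v ↔ v ∈ nonNbhd G w :=
  not_congr mem_closedNbhd_comm

lemma SimpleGraph.IsClique.mem_closedNbhd {C : Set V} (hC : G.IsClique C) {v w : V}
    (hv : v ∈ C) (hw : w ∈ C) : w ∈ closedNbhd G v := by
  rcases eq_or_ne v w with rfl | hvw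
  · exact mem_insert v _
  · exact Or.inr (hC hv hw hvw)

lemma IsUniversalVertex.mem_closedNbhd {u : V} (hu : IsUniversalVertex G u) (v : V) :
    u ∈ closedNbhd G v :=
  mem_closedNbhd_comm.mp (hu ▸ mem_univ v)

lemma mem_closedNbhd_or_of_disjoint_nonNbhd {a b : V}
    (hab : Disjoint (nonNbhd G a) (nonNbhd G b)) (v : V) :
    a ∈ closedNbhd G v ∨ b ∈ closedNbhd G v := by
  by_contra! h
  exact hab.notMem_of_mem_left (mem_nonNbhd_comm.mp h.1) (mem_nonNbhd_comm.mp h.2)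

lemma three_le_ncard_closedNbhd_inter [Finite V] {D : Set V} {v x y z : V}
    (hx : x ∈ closedNbhd G v ∩ D) (hy : y ∈ closedNbhd G v ∩ D) (hz : z ∈ closedNbhd G v ∩ D)
    (hxy : x ≠ y) (hxz : x ≠ z) (hyz : y ≠ z) : 3 ≤ (closedNbhd G v ∩ D).ncard :=
  (two_lt_ncard).mpr ⟨x, hx, y, hy, z, hz, hxy, hxz, hyz⟩

lemma gammaTuple_eq_of_le {k m : ℕ} {D : Set V} (hD : IsKTupleDomSet G k D)
    (hDm : D.ncard ≤ m) (hmin : ∀ D', IsKTupleDomSet G k D' → m ≤ D'.ncard) :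
    gammaTuple G k = m := by
  have hmem : D.ncard ∈ {n | ∃ D : Set V, IsKTupleDomSet G k D ∧ D.ncard = n} := ⟨D, hD, rfl⟩
  refine le_antisymm ((Nat.sInf_le hmem).trans hDm) (le_csInf ⟨_, hmem⟩ ?_)
  rintro _ ⟨D', hD', rfl⟩
  exact hmin D' hD'

namespace IsKTupleDomSet

variable [Finite V] {k : ℕ} {D : Set V}

lemma ncard_nonNbhd_inter_add_le (hD : IsKTupleDomSet G k D) (v : V) :
    (nonNbhd G v ∩ D).ncard + k ≤ D.ncard := by
  have hsplit := ncard_inter_add_ncard_sdiff_eq_ncard D (closedNbhd G v)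
  rw [inter_comm, sdiff_eq, inter_comm D] at hsplit
  have := hD v
  unfold nonNbhd
  omega

lemma isUniversalVertex_of_ncard_le (hD : IsKTupleDomSet G k D) (hDk : D.ncard ≤ k)
    {d : V} (hd : d ∈ D) : IsUniversalVertex G d := by
  refine eq_univ_of_forall fun v => mem_closedNbhd_comm.mp ?_
  have hempty : (nonNbhd G v ∩ D).ncard = 0 := by
    have := hD.ncard_nonNbhd_inter_add_le v
    omega
  by_contra hdv
  exact ((ncard_eq_zero).mp hempty).subset ⟨hdv, hd⟩

lemma lt_ncard [Nonempty V] (hD : IsKTupleDomSet G k D)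
    (hU : {u | IsUniversalVertex G u}.ncard < k) : k < D.ncard := by
  by_contra! hDk
  have hDU : D.ncard ≤ {u | IsUniversalVertex G u}.ncard :=
    ncard_le_ncard fun d hd => hD.isUniversalVertex_of_ncard_le hDk hd
  have := (hD (Classical.arbitrary V)).trans (ncard_le_ncard inter_subset_right)
  omega

lemma ncard_inter_le_one (hD : IsKTupleDomSet G k D) (hDk : D.ncard ≤ k + 1) {A : Set V}
    (hA : A.Pairwise fun x y => ¬Disjoint (nonNbhd G x) (nonNbhd G y)) :
    (A ∩ D).ncard ≤ 1 := by
  refine (ncard_le_one).mpr fun x hx y hy => ?_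
  by_contra hxy
  obtain ⟨w, hwx, hwy⟩ := not_disjoint_iff.mp (hA hx.1 hy.1 hxy)
  have htwo : 1 < (nonNbhd G w ∩ D).ncard :=
    (one_lt_ncard).mpr
      ⟨x, ⟨mem_nonNbhd_comm.mp hwx, hx.2⟩, y, ⟨mem_nonNbhd_comm.mp hwy, hy.2⟩, hxy⟩
  have := hD.ncard_nonNbhd_inter_add_le w
  omega

lemma ncard_le_three_of_union_eq_univ (hD : IsKTupleDomSet G k D) (hDk : D.ncard ≤ k + 1)
    {A B C : Set V} (hcover : A ∪ B ∪ C = univ)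
    (hA : A.Pairwise fun x y => ¬Disjoint (nonNbhd G x) (nonNbhd G y))
    (hB : B.Pairwise fun x y => ¬Disjoint (nonNbhd G x) (nonNbhd G y))
    (hC : C.Pairwise fun x y => ¬Disjoint (nonNbhd G x) (nonNbhd G y)) :
    D.ncard ≤ 3 := by
  have hsplit : D = A ∩ D ∪ B ∩ D ∪ C ∩ D := by
    rw [← union_inter_distrib_right, ← union_inter_distrib_right, hcover, univ_inter]
  have hAB := ncard_union_le (A ∩ D) (B ∩ D)
  have hABC := ncard_union_le (A ∩ D ∪ B ∩ D) (C ∩ D)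
  rw [← hsplit] at hABC
  have := hD.ncard_inter_le_one hDk hA
  have := hD.ncard_inter_le_one hDk hB
  have := hD.ncard_inter_le_one hDk hC
  omega

end IsKTupleDomSet

lemma pairwise_not_disjoint_nonNbhd_of_isGreatest_one {C : Set V}
    (hα : IsGreatest {n | ∃ S : Set V, S ⊆ C ∧ IsC0PStable G S ∧ S.ncard = n} 1) :
    C.Pairwise fun x y => ¬Disjoint (nonNbhd G x) (nonNbhd G y) := by
  intro x hx y hy hxy hdisj
  have := hα.2 ⟨{x, y}, pair_subset hx hy, pairwise_pair.mpr fun _ => ⟨hdisj, hdisj.symm⟩,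
    ncard_pair hxy⟩
  omega

lemma exists_ne_disjoint_nonNbhd_of_two_le [Finite V] {C : Set V} {α : ℕ}
    (hα : IsGreatest {n | ∃ S : Set V, S ⊆ C ∧ IsC0PStable G S ∧ S.ncard = n} α) (h2 : 2 ≤ α) :
    ∃ a ∈ C, ∃ b ∈ C, a ≠ b ∧ Disjoint (nonNbhd G a) (nonNbhd G b) := by
  obtain ⟨S, hSC, hS, rfl⟩ := hα.1
  obtain ⟨a, ha, b, hb, hab⟩ := (one_lt_ncard).mp h2
  exact ⟨a, hSC ha, b, hSC hb, hab, hS ha hb hab⟩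

section CliquesAndUniversalVertex

variable [Finite V] {A B : Set V} {u : V}

lemma exists_isKTupleDomSet_three_ncard_le_four (hA : G.IsClique A) (hB : G.IsClique B)
    (hu : IsUniversalVertex G u) (hcover : A ∪ B ∪ {u} = univ) (huA : u ∉ A) (huB : u ∉ B)
    (hAB : Disjoint A B) {α : ℕ}
    (hα : IsGreatest {n | ∃ S : Set V, S ⊆ A ∧ IsC0PStable G S ∧ S.ncard = n} α) (h2 : 2 ≤ α)
    (hBne : B.Nonempty) : ∃ D, IsKTupleDomSet G 3 D ∧ D.ncard ≤ 4 := by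
  obtain ⟨a, ha, b, hb, hab, hdisj⟩ := exists_ne_disjoint_nonNbhd_of_two_le hα h2
  obtain ⟨c, hc⟩ := hBne
  have hua : u ≠ a := (ne_of_mem_of_not_mem ha huA).symm
  have hub : u ≠ b := (ne_of_mem_of_not_mem hb huA).symm
  have huc : u ≠ c := (ne_of_mem_of_not_mem hc huB).symm
  have hac : a ≠ c := hAB.ne_of_mem ha hc
  have hbc : b ≠ c := hAB.ne_of_mem hb hc
  refine ⟨{u, a, b, c}, fun v => ?_, ?_⟩
  · have hv : v ∈ A ∪ B ∪ {u} := hcover ▸ mem_univ v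
    have huv : u ∈ closedNbhd G v ∩ {u, a, b, c} := ⟨hu.mem_closedNbhd v, by simp⟩
    rcases hv with (hv | hv) | rfl
    · exact three_le_ncard_closedNbhd_inter huv ⟨hA.mem_closedNbhd hv ha, by simp⟩
        ⟨hA.mem_closedNbhd hv hb, by simp⟩ hua hub hab
    · have hcv : c ∈ closedNbhd G v ∩ {u, a, b, c} := ⟨hB.mem_closedNbhd hv hc, by simp⟩
      rcases mem_closedNbhd_or_of_disjoint_nonNbhd hdisj v with hav | hbv
      · exact three_le_ncard_closedNbhd_inter huv ⟨hav, by simp⟩ hcv hua huc hac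
      · exact three_le_ncard_closedNbhd_inter huv ⟨hbv, by simp⟩ hcv hub huc hbc
    · exact three_le_ncard_closedNbhd_inter huv ⟨hu ▸ mem_univ a, by simp⟩
        ⟨hu ▸ mem_univ b, by simp⟩ hua hub hab
  · grw [ncard_insert_le, ncard_insert_le, ncard_insert_le, ncard_singleton]

lemma exists_isKTupleDomSet_three_ncard_le_five (hA : G.IsClique A) (hB : G.IsClique B)
    (hu : IsUniversalVertex G u) (hcover : A ∪ B ∪ {u} = univ) (huA : u ∉ A) (huB : u ∉ B)
    (hA2 : 2 ≤ A.ncard) (hB2 : 2 ≤ B.ncard) : ∃ D, IsKTupleDomSet G 3 D ∧ D.ncard ≤ 5 := by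
  obtain ⟨a, ha, a', ha', haa'⟩ := (one_lt_ncard).mp hA2
  obtain ⟨b, hb, b', hb', hbb'⟩ := (one_lt_ncard).mp hB2
  have hua : u ≠ a := (ne_of_mem_of_not_mem ha huA).symm
  have hua' : u ≠ a' := (ne_of_mem_of_not_mem ha' huA).symm
  have hub : u ≠ b := (ne_of_mem_of_not_mem hb huB).symm
  have hub' : u ≠ b' := (ne_of_mem_of_not_mem hb' huB).symm
  refine ⟨{u, a, a', b, b'}, fun v => ?_, ?_⟩
  · have hv : v ∈ A ∪ B ∪ {u} := hcover ▸ mem_univ v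
    have huv : u ∈ closedNbhd G v ∩ {u, a, a', b, b'} := ⟨hu.mem_closedNbhd v, by simp⟩
    rcases hv with (hv | hv) | rfl
    · exact three_le_ncard_closedNbhd_inter huv ⟨hA.mem_closedNbhd hv ha, by simp⟩
        ⟨hA.mem_closedNbhd hv ha', by simp⟩ hua hua' haa'
    · exact three_le_ncard_closedNbhd_inter huv ⟨hB.mem_closedNbhd hv hb, by simp⟩
        ⟨hB.mem_closedNbhd hv hb', by simp⟩ hub hub' hbb'
    · exact three_le_ncard_closedNbhd_inter huv ⟨hu ▸ mem_univ a, by simp⟩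
        ⟨hu ▸ mem_univ a', by simp⟩ hua hua' haa'
  · grw [ncard_insert_le, ncard_insert_le, ncard_insert_le, ncard_insert_le, ncard_singleton]

end CliquesAndUniversalVertex

end

theorem stmt11_general {V : Type*} [Fintype V] (G : SimpleGraph V) (C1 C2 U : Set V)
    (hd12 : Disjoint C1 C2) (hd1U : Disjoint C1 U) (hd2U : Disjoint C2 U)
    (hunion : C1 ∪ C2 ∪ U = Set.univ)
    (hne1 : C1.Nonempty) (hne2 : C2.Nonempty)
    (hcl1 : G.IsClique C1) (hcl2 : G.IsClique C2)
    (hU : U = {u : V | IsUniversalVertex G u})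
    (α1 α2 : ℕ)
    (hα1 : IsGreatest {n | ∃ S : Set V, S ⊆ C1 ∧ IsC0PStable G S ∧ S.ncard = n} α1)
    (hα2 : IsGreatest {n | ∃ S : Set V, S ⊆ C2 ∧ IsC0PStable G S ∧ S.ncard = n} α2)
    (hUcard : U.ncard = 1) :
    (3 ≤ α1 + α2 → (∃ D : Set V, IsKTupleDomSet G 3 D) ∧ gammaTuple G 3 = 4) ∧
    (α1 = 1 → α2 = 1 → 2 ≤ C1.ncard → 2 ≤ C2.ncard →
      (∃ D : Set V, IsKTupleDomSet G 3 D) ∧ gammaTuple G 3 = 5) := by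
  obtain ⟨u, rfl⟩ := ncard_eq_one.mp hUcard
  have hu : IsUniversalVertex G u := hU.subset (mem_singleton u)
  have huC1 : u ∉ C1 := hd1U.notMem_of_mem_right (mem_singleton u)
  have huC2 : u ∉ C2 := hd2U.notMem_of_mem_right (mem_singleton u)
  have : Nonempty V := ⟨u⟩
  have hfour_le : ∀ D, IsKTupleDomSet G 3 D → 4 ≤ D.ncard := fun D hD =>
    hD.lt_ncard (by rw [← hU, hUcard]; norm_num)
  refine ⟨fun hα => ?_, fun h1 h2 hC1 hC2 => ?_⟩
  · obtain ⟨D, hD, hD4⟩ : ∃ D, IsKTupleDomSet G 3 D ∧ D.ncard ≤ 4 := by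
      rcases (by omega : 2 ≤ α1 ∨ 2 ≤ α2) with h | h
      · exact exists_isKTupleDomSet_three_ncard_le_four hcl1 hcl2 hu hunion huC1 huC2 hd12 hα1
          h hne2
      · exact exists_isKTupleDomSet_three_ncard_le_four hcl2 hcl1 hu
          (by rwa [union_comm C2 C1]) huC2 huC1 hd12.symm hα2 h hne1
    exact ⟨⟨D, hD⟩, gammaTuple_eq_of_le hD hD4 hfour_le⟩
  · obtain ⟨D, hD, hD5⟩ :=
      exists_isKTupleDomSet_three_ncard_le_five hcl1 hcl2 hu hunion huC1 huC2 hC1 hC2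
    refine ⟨⟨D, hD⟩, gammaTuple_eq_of_le hD hD5 fun D' hD' => ?_⟩
    by_contra! hD'4
    have := hD'.ncard_le_three_of_union_eq_univ (by omega) hunion
      (pairwise_not_disjoint_nonNbhd_of_isGreatest_one (h1 ▸ hα1))
      (pairwise_not_disjoint_nonNbhd_of_isGreatest_one (h2 ▸ hα2))
      (subsingleton_singleton.pairwise _)
    have := hfour_le D' hD'
    omega

/-- in a C0P-graph whose set `U` of universal vertices has `|U| = 1`:
if `α1 + α2 ≥ 3` then `G` has a `3`-tuple dominating set and `γ×3(G) = 4`; and if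
`α1 = α2 = 1`, `|C1| ≥ 2` and `|C2| ≥ 2`, then `G` has a `3`-tuple dominating set and
`γ×3(G) = 5`. -/
theorem stmt11 {V : Type*} [Fintype V] [LinearOrder V] (G : SimpleGraph V) (C1 C2 U : Set V)
    (hd12 : Disjoint C1 C2) (hd1U : Disjoint C1 U) (hd2U : Disjoint C2 U)
    (hunion : C1 ∪ C2 ∪ U = Set.univ)
    (hne1 : C1.Nonempty) (hne2 : C2.Nonempty)
    (hcl1 : G.IsClique C1) (hcl2 : G.IsClique C2)
    (hU : U = {u : V | IsUniversalVertex G u})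
    (hint1 : ∀ v ∈ C1, (nonNbhd G v).Nonempty ∧
      ∀ a ∈ C2, ∀ b ∈ C2, ∀ c ∈ C2, a ≤ b → b ≤ c →
        a ∈ nonNbhd G v → c ∈ nonNbhd G v → b ∈ nonNbhd G v)
    (hint2 : ∀ v ∈ C2, (nonNbhd G v).Nonempty ∧
      ∀ a ∈ C1, ∀ b ∈ C1, ∀ c ∈ C1, a ≤ b → b ≤ c →
        a ∈ nonNbhd G v → c ∈ nonNbhd G v → b ∈ nonNbhd G v)
    (α1 α2 : ℕ)
    (hα1 : IsGreatest {n | ∃ S : Set V, S ⊆ C1 ∧ IsC0PStable G S ∧ S.ncard = n} α1)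
    (hα2 : IsGreatest {n | ∃ S : Set V, S ⊆ C2 ∧ IsC0PStable G S ∧ S.ncard = n} α2)
    (hUcard : U.ncard = 1) :
    (3 ≤ α1 + α2 → (∃ D : Set V, IsKTupleDomSet G 3 D) ∧ gammaTuple G 3 = 4) ∧
    (α1 = 1 → α2 = 1 → 2 ≤ C1.ncard → 2 ≤ C2.ncard →
      (∃ D : Set V, IsKTupleDomSet G 3 D) ∧ gammaTuple G 3 = 5) :=
  stmt11_general G C1 C2 U hd12 hd1U hd2U hunion hne1 hne2 hcl1 hcl2 hU α1 α2 hα1 hα2 hUcard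
end

section
/- With G, C1, C2, α_1, α_2 as in the context (in particular G has no universal vertex), let k be a positive integer. If α_1 + α_2 > k, then G has a k-tuple dominating set and γ×k(G) = k + 1. -/
open Set

/-- in a C0P-graph with no universal vertices, if `α1 + α2 > k` for a positive integer `k`, then `G` has a `k`-tuple dominating set and `γ×k(G) = k + 1`. -/
theorem stmt18 {V : Type*} [Fintype V] [LinearOrder V] (G : SimpleGraph V) (C1 C2 : Set V)
    (hd12 : Disjoint C1 C2) (hunion : C1 ∪ C2 = Set.univ)
    (hne1 : C1.Nonempty) (hne2 : C2.Nonempty)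
    (hcl1 : G.IsClique C1) (hcl2 : G.IsClique C2)
    (hnouniv : ∀ v : V, ¬ IsUniversalVertex G v)
    (hint1 : ∀ v ∈ C1, (nonNbhd G v).Nonempty ∧
      ∀ a ∈ C2, ∀ b ∈ C2, ∀ c ∈ C2, a ≤ b → b ≤ c →
        a ∈ nonNbhd G v → c ∈ nonNbhd G v → b ∈ nonNbhd G v)
    (hint2 : ∀ v ∈ C2, (nonNbhd G v).Nonempty ∧
      ∀ a ∈ C1, ∀ b ∈ C1, ∀ c ∈ C1, a ≤ b → b ≤ c →
        a ∈ nonNbhd G v → c ∈ nonNbhd G v → b ∈ nonNbhd G v)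
    (α1 α2 : ℕ)
    (hα1 : IsGreatest {n | ∃ S : Set V, S ⊆ C1 ∧ IsC0PStable G S ∧ S.ncard = n} α1)
    (hα2 : IsGreatest {n | ∃ S : Set V, S ⊆ C2 ∧ IsC0PStable G S ∧ S.ncard = n} α2)
    (k : ℕ) (hk : 0 < k) (h : k < α1 + α2) :
    (∃ D : Set V, IsKTupleDomSet G k D) ∧ gammaTuple G k = k + 1 := by
  classical
  -- basic facts
  have hsymm : ∀ u v : V, u ∈ closedNbhd G v ↔ v ∈ closedNbhd G u := by
    intro u v
    simp only [closedNbhd, Set.mem_insert_iff, Set.mem_setOf_eq, G.adj_comm]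
    constructor <;> rintro (h | h) <;> [exact Or.inl h.symm; exact Or.inr h;
      exact Or.inl h.symm; exact Or.inr h]
  -- get stable sets
  obtain ⟨S1, hS1C, hS1st, hS1card⟩ := hα1.1
  obtain ⟨S2, hS2C, hS2st, hS2card⟩ := hα2.1
  have hS12 : Disjoint S1 S2 := hd12.mono hS1C hS2C
  have hucard : (S1 ∪ S2).ncard = α1 + α2 := by
    rw [Set.ncard_union_eq hS12 (Set.toFinite _) (Set.toFinite _), hS1card, hS2card]
  have hge : k + 1 ≤ (S1 ∪ S2).ncard := by omega
  obtain ⟨D, hDsub, hDcard⟩ := Set.exists_subset_card_eq hge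
  -- D is a k-tuple dominating set
  have hdom : IsKTupleDomSet G k D := by
    intro v
    -- the set of elements of D not dominating v is a subsingleton
    have hsub : (nonNbhd G v ∩ D).Subsingleton := by
      intro a ha b hb
      by_contra hab
      have hav : v ∈ nonNbhd G a := by
        intro hmem; exact ha.1 ((hsymm v a).mp hmem)
      have hbv : v ∈ nonNbhd G b := by
        intro hmem; exact hb.1 ((hsymm v b).mp hmem)
      have hvC : v ∈ C1 ∪ C2 := hunion ▸ Set.mem_univ v
      -- a and b are non-neighbors of v, hence (by clique) in the other side
      have key : ∀ x ∈ D, x ∈ nonNbhd G v → (v ∈ C1 → x ∈ S2) ∧ (v ∈ C2 → x ∈ S1) := by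
        intro x hxD hxv
        have hxS : x ∈ S1 ∪ S2 := hDsub hxD
        have hxne : x ≠ v := by
          rintro rfl; exact hxv (Set.mem_insert x _)
        constructor
        · intro hv1
          rcases hxS with hx1 | hx2
          · exact absurd (Or.inr ((hcl1 hv1 (hS1C hx1) hxne.symm))) hxv
          · exact hx2
        · intro hv2
          rcases hxS with hx1 | hx2
          · exact hx1
          · exact absurd (Or.inr ((hcl2 hv2 (hS2C hx2) hxne.symm))) hxv
      rcases hvC with hv1 | hv2
      · have haS := ((key a ha.2 ha.1).1 hv1)
        have hbS := ((key b hb.2 hb.1).1 hv1)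
        exact (hS2st haS hbS hab).ne_of_mem hav hbv rfl
      · have haS := ((key a ha.2 ha.1).2 hv2)
        have hbS := ((key b hb.2 hb.1).2 hv2)
        exact (hS1st haS hbS hab).ne_of_mem hav hbv rfl
    have hcard1 : (nonNbhd G v ∩ D).ncard ≤ 1 := by
      rcases hsub.eq_empty_or_singleton with he | ⟨x, hx⟩
      · simp [he]
      · simp [hx]
    have hsplit : closedNbhd G v ∩ D = D \ (nonNbhd G v ∩ D) := by
      ext x
      simp only [Set.mem_inter_iff, Set.mem_diff, nonNbhd, Set.mem_compl_iff, closedNbhd, Set.mem_insert_iff, Set.mem_setOf_eq]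
      tauto
    have hle := Set.ncard_le_ncard_diff_add_ncard D (nonNbhd G v ∩ D) (Set.toFinite _)
    rw [hsplit]
    omega
  refine ⟨⟨D, hdom⟩, ?_⟩
  -- gammaTuple = k + 1
  have hmem : k + 1 ∈ {n | ∃ D : Set V, IsKTupleDomSet G k D ∧ D.ncard = n} :=
    ⟨D, hdom, hDcard⟩
  apply le_antisymm (Nat.sInf_le hmem)
  apply le_csInf ⟨k + 1, hmem⟩
  rintro n ⟨D', hD'dom, rfl⟩
  by_contra hlt
  push_neg at hlt
  obtain ⟨v0, hv0⟩ := hne1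
  have hle := (hD'dom v0).trans (Set.ncard_le_ncard Set.inter_subset_right (Set.toFinite _))
  have hcard : D'.ncard = k := by omega
  -- then D' ⊆ N[v] for every v, so any element of D' is universal
  have hDsubN : ∀ v : V, D' ⊆ closedNbhd G v := by
    intro v
    have h1 : closedNbhd G v ∩ D' = D' := by
      apply Set.eq_of_subset_of_ncard_le Set.inter_subset_right _ (Set.toFinite _)
      rw [hcard]; exact hD'dom v
    rw [← h1]; exact Set.inter_subset_left
  have hDne : D'.Nonempty := by
    rw [← Set.ncard_pos (Set.toFinite _)] at *
    omega
  obtain ⟨d, hd⟩ := hDne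
  apply hnouniv d
  ext w
  simp only [Set.mem_univ, iff_true]
  exact (hsymm d w).mp (hDsubN w hd)
end

section
/- With G, C1, C2, α_1, α_2 as in the context (in particular G has no universal vertex), let k be a positive integer. If α_1 + α_2 = k and |C_i| ≥ α_i + 1 for i = 1, 2, then G has a k-tuple dominating set and γ×k(G) = k + 2. -/
open Set

/- ### Auxiliary lemmas -/

/-- Non-adjacency is symmetric. -/
lemma mem_nonNbhd_symm {V : Type*} {G : SimpleGraph V} {v w : V}
    (h : w ∈ nonNbhd G v) : v ∈ nonNbhd G w := by
  simp only [nonNbhd, closedNbhd, Set.mem_compl_iff, Set.mem_insert_iff,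
    Set.mem_setOf_eq, not_or] at h ⊢
  exact ⟨fun e => h.1 e.symm, fun a => h.2 a.symm⟩

/-- The closed neighborhood and the non-neighborhood partition any set `D` (cardinality). -/
lemma ncard_split {V : Type*} [Fintype V] (G : SimpleGraph V) (D : Set V) (v : V) :
    (closedNbhd G v ∩ D).ncard + (nonNbhd G v ∩ D).ncard = D.ncard := by
  have h := Set.ncard_inter_add_ncard_diff_eq_ncard D (closedNbhd G v) D.toFinite
  rw [Set.inter_comm,
    show nonNbhd G v ∩ D = D \ closedNbhd G v by rw [Set.diff_eq, Set.inter_comm]; rfl]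
  exact h

/-- A stable set meets any non-neighborhood in at most one point. -/
lemma stable_inter_le_one {V : Type*} [Fintype V] {G : SimpleGraph V} {S : Set V}
    (hS : IsC0PStable G S) (v : V) : (nonNbhd G v ∩ S).ncard ≤ 1 := by
  by_contra hgt
  push_neg at hgt
  obtain ⟨a, b, ha, hb, hab⟩ := (Set.one_lt_ncard_iff (Set.toFinite _)).mp hgt
  exact Set.disjoint_left.mp (hS ha.2 hb.2 hab) (mem_nonNbhd_symm ha.1) (mem_nonNbhd_symm hb.1)

/-- in a C0P-graph with no universal vertices, if `α1 + α2 = k` for a positive integer `k` and `|C_i| ≥ α_i + 1` for `i = 1, 2`, then `G` has a `k`-tuple dominating set and `γ×k(G) = k + 2`. -/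
theorem stmt19 {V : Type*} [Fintype V] [LinearOrder V] (G : SimpleGraph V) (C1 C2 : Set V)
    (hd12 : Disjoint C1 C2) (hunion : C1 ∪ C2 = Set.univ)
    (hne1 : C1.Nonempty) (hne2 : C2.Nonempty)
    (hcl1 : G.IsClique C1) (hcl2 : G.IsClique C2)
    (hnouniv : ∀ v : V, ¬ IsUniversalVertex G v)
    (hint1 : ∀ v ∈ C1, (nonNbhd G v).Nonempty ∧
      ∀ a ∈ C2, ∀ b ∈ C2, ∀ c ∈ C2, a ≤ b → b ≤ c →
        a ∈ nonNbhd G v → c ∈ nonNbhd G v → b ∈ nonNbhd G v)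
    (hint2 : ∀ v ∈ C2, (nonNbhd G v).Nonempty ∧
      ∀ a ∈ C1, ∀ b ∈ C1, ∀ c ∈ C1, a ≤ b → b ≤ c →
        a ∈ nonNbhd G v → c ∈ nonNbhd G v → b ∈ nonNbhd G v)
    (α1 α2 : ℕ)
    (hα1 : IsGreatest {n | ∃ S : Set V, S ⊆ C1 ∧ IsC0PStable G S ∧ S.ncard = n} α1)
    (hα2 : IsGreatest {n | ∃ S : Set V, S ⊆ C2 ∧ IsC0PStable G S ∧ S.ncard = n} α2)
    (k : ℕ) (hk : 0 < k) (h : α1 + α2 = k)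
    (hc1 : α1 + 1 ≤ C1.ncard) (hc2 : α2 + 1 ≤ C2.ncard) :
    (∃ D : Set V, IsKTupleDomSet G k D) ∧ gammaTuple G k = k + 2 := by
  -- every vertex has a nonempty non-neighborhood
  have hnn : ∀ v : V, (nonNbhd G v).Nonempty := by
    intro v
    exact Set.nonempty_compl.mpr (hnouniv v)
  have hmemU : ∀ v : V, v ∈ C1 ∨ v ∈ C2 := by
    intro v
    have : v ∈ C1 ∪ C2 := by rw [hunion]; exact Set.mem_univ v
    exact this
  -- non-neighborhoods of one clique lie in the other clique
  have hsub : ∀ C C' : Set V, Disjoint C C' → C ∪ C' = Set.univ → G.IsClique C →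
      ∀ v ∈ C, nonNbhd G v ⊆ C' := by
    intro C C' hd hu hcl v hv w hw
    simp only [nonNbhd, closedNbhd, Set.mem_compl_iff, Set.mem_insert_iff,
      Set.mem_setOf_eq, not_or] at hw
    have hwU : w ∈ C ∪ C' := by rw [hu]; exact Set.mem_univ w
    rcases hwU with hwC | hwC'
    · exact absurd (hcl hv hwC (fun e => hw.1 e.symm)) hw.2
    · exact hwC'
  have hsub1 : ∀ v ∈ C1, nonNbhd G v ⊆ C2 := hsub C1 C2 hd12 hunion hcl1
  have hsub2 : ∀ v ∈ C2, nonNbhd G v ⊆ C1 := by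
    refine hsub C2 C1 hd12.symm ?_ hcl2
    rw [Set.union_comm]; exact hunion
  -- witnesses for α1, α2
  obtain ⟨S1, hS1C, hS1st, hS1card⟩ := hα1.1
  obtain ⟨S2, hS2C, hS2st, hS2card⟩ := hα2.1
  -- extra vertices
  have hx1 : (C1 \ S1).Nonempty := by
    rw [Set.nonempty_iff_ne_empty]
    intro hemp
    rw [Set.diff_eq_empty] at hemp
    have := Set.ncard_le_ncard hemp (Set.toFinite _)
    omega
  have hx2 : (C2 \ S2).Nonempty := by
    rw [Set.nonempty_iff_ne_empty]
    intro hemp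
    rw [Set.diff_eq_empty] at hemp
    have := Set.ncard_le_ncard hemp (Set.toFinite _)
    omega
  obtain ⟨x1, hx1C, hx1S⟩ := hx1
  obtain ⟨x2, hx2C, hx2S⟩ := hx2
  -- the dominating set of size k + 2
  set D : Set V := insert x1 (insert x2 (S1 ∪ S2)) with hDdef
  have hx12 : x1 ≠ x2 := fun e => Set.disjoint_left.mp hd12 hx1C (e ▸ hx2C)
  have hdS : Disjoint S1 S2 := hd12.mono hS1C hS2C
  have hx2notin : x2 ∉ S1 ∪ S2 := by
    rintro (hx | hx)
    · exact Set.disjoint_left.mp hd12 (hS1C hx) hx2C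
    · exact hx2S hx
  have hx1notin : x1 ∉ insert x2 (S1 ∪ S2) := by
    rintro (hx | hx | hx)
    · exact hx12 hx
    · exact hx1S hx
    · exact Set.disjoint_left.mp hd12 hx1C (hS2C hx)
  have hDcard : D.ncard = k + 2 := by
    rw [hDdef, Set.ncard_insert_of_notMem hx1notin (Set.toFinite _),
      Set.ncard_insert_of_notMem hx2notin (Set.toFinite _),
      Set.ncard_union_eq hdS (Set.toFinite _) (Set.toFinite _), hS1card, hS2card, h]
  -- D is a k-tuple dominating set
  have hDdom : IsKTupleDomSet G k D := by
    intro v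
    have hsplit := ncard_split G D v
    rw [hDcard] at hsplit
    -- it suffices that the non-neighborhood of v meets D in at most 2 points
    have hle2 : (nonNbhd G v ∩ D).ncard ≤ 2 := by
      rcases hmemU v with hv | hv
      · -- v ∈ C1 : nonNbhd v ⊆ C2, so nonNbhd v ∩ D ⊆ insert x2 (nonNbhd v ∩ S2)
        have hss : nonNbhd G v ∩ D ⊆ insert x2 (nonNbhd G v ∩ S2) := by
          rintro w ⟨hw1, hw2 | hw2 | hw2 | hw2⟩
          · exact absurd (hsub1 v hv hw1) (fun hc => Set.disjoint_left.mp hd12 (hw2 ▸ hx1C) hc)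
          · exact Or.inl hw2
          · exact absurd (hsub1 v hv hw1) (fun hc => Set.disjoint_left.mp hd12 (hS1C hw2) hc)
          · exact Or.inr ⟨hw1, hw2⟩
        calc (nonNbhd G v ∩ D).ncard ≤ (insert x2 (nonNbhd G v ∩ S2)).ncard :=
              Set.ncard_le_ncard hss (Set.toFinite _)
          _ ≤ (nonNbhd G v ∩ S2).ncard + 1 := Set.ncard_insert_le _ _
          _ ≤ 2 := by have := stable_inter_le_one hS2st v; omega
      · -- v ∈ C2, symmetric
        have hss : nonNbhd G v ∩ D ⊆ insert x1 (nonNbhd G v ∩ S1) := by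
          rintro w ⟨hw1, hw2 | hw2 | hw2 | hw2⟩
          · exact Or.inl hw2
          · exact absurd (hsub2 v hv hw1) (fun hc => Set.disjoint_left.mp hd12 hc (hw2 ▸ hx2C))
          · exact Or.inr ⟨hw1, hw2⟩
          · exact absurd (hsub2 v hv hw1) (fun hc => Set.disjoint_left.mp hd12 hc (hS2C hw2))
        calc (nonNbhd G v ∩ D).ncard ≤ (insert x1 (nonNbhd G v ∩ S1)).ncard :=
              Set.ncard_le_ncard hss (Set.toFinite _)
          _ ≤ (nonNbhd G v ∩ S1).ncard + 1 := Set.ncard_insert_le _ _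
          _ ≤ 2 := by have := stable_inter_le_one hS1st v; omega
    omega
  -- lower bound : every k-tuple dominating set has at least k + 2 vertices
  have hlower : ∀ E : Set V, IsKTupleDomSet G k E → k + 2 ≤ E.ncard := by
    intro E hE
    by_contra hlt
    push_neg at hlt
    -- every non-neighborhood meets E in at most one vertex
    have hle1 : ∀ v : V, (nonNbhd G v ∩ E).ncard ≤ 1 := by
      intro v
      have hsplit := ncard_split G E v
      have := hE v
      omega
    -- hence E ∩ C1 and E ∩ C2 are stable
    have hstab : ∀ C : Set V, IsC0PStable G (E ∩ C) := by
      intro C x hx y hy hxy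
      rw [Set.disjoint_left]
      intro v hvx hvy
      have hxy2 : ({x, y} : Set V) ⊆ nonNbhd G v ∩ E :=
        Set.insert_subset ⟨mem_nonNbhd_symm hvx, hx.1⟩
          (Set.singleton_subset_iff.mpr ⟨mem_nonNbhd_symm hvy, hy.1⟩)
      have h2 := Set.ncard_le_ncard hxy2 (Set.toFinite _)
      rw [Set.ncard_pair hxy] at h2
      have := hle1 v
      omega
    have hEC1 : (E ∩ C1).ncard ≤ α1 :=
      hα1.2 ⟨E ∩ C1, Set.inter_subset_right, hstab C1, rfl⟩
    have hEC2 : (E ∩ C2).ncard ≤ α2 :=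
      hα2.2 ⟨E ∩ C2, Set.inter_subset_right, hstab C2, rfl⟩
    have hEsplit : (E ∩ C1).ncard + (E ∩ C2).ncard = E.ncard := by
      rw [← Set.ncard_union_eq (hd12.mono Set.inter_subset_right Set.inter_subset_right)
        (Set.toFinite _) (Set.toFinite _), ← Set.inter_union_distrib_left, hunion,
        Set.inter_univ]
    -- so |E| ≤ k; then every non-neighborhood misses E entirely
    have hEk : E.ncard ≤ k := by omega
    have hempty : ∀ v : V, nonNbhd G v ∩ E = ∅ := by
      intro v
      have hsplit := ncard_split G E v
      have h1 := hE v
      have hle : (closedNbhd G v ∩ E).ncard ≤ E.ncard :=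
        Set.ncard_le_ncard Set.inter_subset_right (Set.toFinite _)
      rw [← Set.ncard_eq_zero (Set.toFinite _)]
      omega
    -- but E is nonempty and its members have non-neighbors: contradiction
    have hEne : E.Nonempty := by
      apply Set.nonempty_of_ncard_ne_zero
      obtain ⟨v, -⟩ := hne1
      have h1 := hE v
      have hle : (closedNbhd G v ∩ E).ncard ≤ E.ncard :=
        Set.ncard_le_ncard Set.inter_subset_right (Set.toFinite _)
      omega
    obtain ⟨u, hu⟩ := hEne
    obtain ⟨w, hw⟩ := hnn u
    have : u ∈ nonNbhd G w ∩ E := ⟨mem_nonNbhd_symm hw, hu⟩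
    rw [hempty w] at this
    exact this
  constructor
  · exact ⟨D, hDdom⟩
  · have hmem : (k + 2) ∈ {n | ∃ D : Set V, IsKTupleDomSet G k D ∧ D.ncard = n} :=
      ⟨D, hDdom, hDcard⟩
    have hne : {n | ∃ D : Set V, IsKTupleDomSet G k D ∧ D.ncard = n}.Nonempty := ⟨_, hmem⟩
    refine le_antisymm (Nat.sInf_le hmem) ?_
    obtain ⟨E, hE, hEcard⟩ := Nat.sInf_mem hne
    rw [gammaTuple, ← hEcard]
    exact hlower E hE
end
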